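/- Let Σ be a compact manifold of dimension m−1 with a fixed Riemannian metric h, and let g_j, g₀ be continuous Riemannian metrics on Σ with g₀ ≤ g_j. Suppose ∫_Σ |g_j − g₀|_h^{(m−1)/2} dA_h → 0 as j → ∞, where |·|_h is the pointwise tensor norm with respect to h, and suppose the eigenvalues of g_j with respect to h are uniformly bounded. Then Area(Σ, g_j) → Area(Σ, g₀). -/

import Mathlib

/-! In an `h`-orthonormal frame the metrics are matrix fields and the area density is `√det`.
The bound on `g_j` together with `0 ≤ g₀ ≤ g_j` confines all of them to a compact set of
matrices, on which `√det` is bounded and uniformly continuous. Given `ε`, split `Σ` according to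
whether `|g_j − g₀| < η`: the first part contributes at most `ε · μ(Σ)` to the difference of the
areas and the second, by Chebyshev, at most `2 sup √det · η^{-p} ∫ |g_j − g₀|^p`, which tends
to `0`. -/

open MeasureTheory Filter Matrix

/-- The pointwise Frobenius norm of a matrix (the tensor norm with respect to the
background metric `h`, computed in an `h`-orthonormal frame). -/
noncomputable def frobNorm {k : ℕ} (A : Matrix (Fin k) (Fin k) ℝ) : ℝ :=
  Real.sqrt (∑ i, ∑ l, (A i l) ^ 2)

open scoped Topology

theorem tendsto_zero_of_forall_le_add_mul {ι : Type*} {l : Filter ι} {a b : ι → ℝ}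
    (ha : ∀ i, 0 ≤ a i) (hb : Tendsto b l (𝓝 0))
    (hab : ∀ ε > 0, ∃ C, ∀ i, a i ≤ ε + C * b i) : Tendsto a l (𝓝 0) := by
  refine tendsto_order.2 ⟨fun e he => .of_forall fun i => he.trans_le (ha i), fun e he => ?_⟩
  obtain ⟨C, hC⟩ := hab (e / 2) (half_pos he)
  have hlim : Tendsto (fun i => e / 2 + C * b i) l (𝓝 (e / 2)) := by
    simpa using tendsto_const_nhds.add (hb.const_mul C)
  filter_upwards [hlim.eventually_lt_const (half_lt_self he)] with i hi
  exact (hC i).trans_lt hi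

theorem le_add_div_rpow_mul_rpow {a s ε D η p : ℝ} (hs : 0 ≤ s) (hη : 0 < η) (hp : 0 ≤ p)
    (hε : 0 ≤ ε) (hD : 0 ≤ D) (haD : a ≤ D) (hsmall : s < η → a ≤ ε) :
    a ≤ ε + D / η ^ p * s ^ p := by
  rcases lt_or_ge s η with h | h
  · have : 0 ≤ D / η ^ p * s ^ p := by positivity
    linarith [hsmall h]
  · calc a ≤ D := haD
      _ ≤ D * (s / η) ^ p := le_mul_of_one_le_right hD (Real.one_le_rpow ((one_le_div hη).2 h) hp)
      _ = D / η ^ p * s ^ p := by rw [Real.div_rpow hs hη.le]; ring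
      _ ≤ ε + D / η ^ p * s ^ p := le_add_of_nonneg_left hε

theorem tendsto_integral_comp_of_tendsto_integral_dist_rpow
    {X E : Type*} [MeasurableSpace X] {μ : Measure X} [IsFiniteMeasure μ] [PseudoMetricSpace E]
    {K : Set E} (hK : IsCompact K) {Φ : E → ℝ} (hΦ : ContinuousOn Φ K)
    {u : ℕ → X → E} {v : X → E} (hu : ∀ n x, u n x ∈ K) (hv : ∀ x, v x ∈ K)
    (hΦu : ∀ n, AEStronglyMeasurable (fun x => Φ (u n x)) μ)
    (hΦv : AEStronglyMeasurable (fun x => Φ (v x)) μ)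
    (hd : ∀ n, AEStronglyMeasurable (fun x => dist (u n x) (v x)) μ) {p : ℝ} (hp : 0 ≤ p)
    (h : Tendsto (fun n => ∫ x, dist (u n x) (v x) ^ p ∂μ) atTop (𝓝 0)) :
    Tendsto (fun n => ∫ x, Φ (u n x) ∂μ) atTop (𝓝 (∫ x, Φ (v x) ∂μ)) := by
  obtain ⟨D, hD⟩ := hK.exists_bound_of_continuousOn hΦ
  obtain ⟨R, hR⟩ := Metric.isBounded_iff.1 hK.isBounded
  have hΦui n : Integrable (fun x => Φ (u n x)) μ :=
    .of_bound (hΦu n) D (ae_of_all _ fun x => hD _ (hu n x))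
  have hΦvi : Integrable (fun x => Φ (v x)) μ := .of_bound hΦv D (ae_of_all _ fun x => hD _ (hv x))
  have hdi n : Integrable (fun x => dist (u n x) (v x) ^ p) μ := by
    refine .of_bound ((hd n).aemeasurable.pow_const p).aestronglyMeasurable (R ^ p)
      (ae_of_all _ fun x => ?_)
    rw [Real.norm_of_nonneg (by positivity)]
    exact Real.rpow_le_rpow dist_nonneg (hR (hu n x) (hv x)) hp
  have huc := Metric.uniformContinuousOn_iff.1 (hK.uniformContinuousOn_of_continuous hΦ)
  rw [tendsto_iff_norm_sub_tendsto_zero]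
  refine tendsto_zero_of_forall_le_add_mul (fun _ => norm_nonneg _) h fun ε hε => ?_
  set c := μ.real Set.univ
  obtain ⟨η, hη, hηε⟩ := huc (ε / (c + 1)) (by positivity)
  refine ⟨2 * D / η ^ p, fun n => ?_⟩
  have hpt x : ‖Φ (u n x) - Φ (v x)‖ ≤ ε / (c + 1) + 2 * D / η ^ p * dist (u n x) (v x) ^ p := by
    have hD0 : 0 ≤ D := (norm_nonneg _).trans (hD _ (hv x))
    refine le_add_div_rpow_mul_rpow dist_nonneg hη hp (by positivity) (by positivity) ?_
      fun hsmall => (hηε _ (hu n x) _ (hv x) hsmall).le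
    linarith [norm_sub_le (Φ (u n x)) (Φ (v x)), hD _ (hu n x), hD _ (hv x)]
  calc ‖∫ x, Φ (u n x) ∂μ - ∫ x, Φ (v x) ∂μ‖
      = ‖∫ x, (Φ (u n x) - Φ (v x)) ∂μ‖ := by rw [integral_sub (hΦui n) hΦvi]
    _ ≤ ∫ x, ‖Φ (u n x) - Φ (v x)‖ ∂μ := norm_integral_le_integral_norm _
    _ ≤ ∫ x, (ε / (c + 1) + 2 * D / η ^ p * dist (u n x) (v x) ^ p) ∂μ :=
        integral_mono ((hΦui n).sub hΦvi).norm ((integrable_const _).add ((hdi n).const_mul _)) hpt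
    _ = ε / (c + 1) * c + 2 * D / η ^ p * ∫ x, dist (u n x) (v x) ^ p ∂μ := by
        rw [integral_add (integrable_const _) ((hdi n).const_mul _), integral_const,
          integral_const_mul, smul_eq_mul, mul_comm c]
    _ ≤ ε + 2 * D / η ^ p * ∫ x, dist (u n x) (v x) ^ p ∂μ := by
        gcongr
        rw [div_mul_eq_mul_div, div_le_iff₀ (by positivity)]
        nlinarith [measureReal_nonneg (μ := μ) (s := Set.univ)]

theorem abs_apply_le_frobNorm {k : ℕ} (A : Matrix (Fin k) (Fin k) ℝ) (i j : Fin k) :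
    |A i j| ≤ frobNorm A := by
  rw [frobNorm, ← Real.sqrt_sq_eq_abs]
  gcongr
  calc A i j ^ 2 ≤ ∑ l, A i l ^ 2 :=
        Finset.single_le_sum (fun _ _ => sq_nonneg _) (Finset.mem_univ j)
    _ ≤ ∑ i, ∑ l, A i l ^ 2 :=
        Finset.single_le_sum (f := fun i => ∑ l, A i l ^ 2)
          (fun _ _ => Finset.sum_nonneg fun _ _ => sq_nonneg _) (Finset.mem_univ i)

theorem measurable_frobNorm_of_measurable_entries {X : Type*} [MeasurableSpace X] {k : ℕ}
    {g : X → Matrix (Fin k) (Fin k) ℝ} (hg : ∀ i j, Measurable fun x => g x i j) :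
    Measurable fun x => frobNorm (g x) :=
  (Finset.measurable_sum _ fun i _ => Finset.measurable_sum _ fun j _ =>
    (hg i j).pow_const 2).sqrt

theorem measurable_det_of_measurable_entries {X n : Type*} [MeasurableSpace X] [Fintype n]
    [DecidableEq n]
    {g : X → Matrix n n ℝ} (hg : ∀ i j, Measurable fun x => g x i j) :
    Measurable fun x => (g x).det := by
  simp_rw [Matrix.det_apply']
  exact Finset.measurable_sum _ fun σ _ =>
    (Finset.measurable_prod _ fun i _ => hg (σ i) i).const_mul _

theorem isCompact_setOf_abs_apply_le (m n : Type*) (M : ℝ) :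
    IsCompact {A : Matrix m n ℝ | ∀ i j, |A i j| ≤ M} := by
  have hbox := isCompact_univ_pi fun _ : m => isCompact_univ_pi fun _ : n =>
    isCompact_Icc (a := -M) (b := M)
  simp only [Set.pi, Set.mem_univ, forall_const, Set.mem_Icc, ← abs_le] at hbox
  exact hbox

namespace Matrix

variable {n : Type*} [Fintype n] [DecidableEq n]

theorem single_dotProduct_mulVec_single (A : Matrix n n ℝ) (i : n) :
    Pi.single i 1 ⬝ᵥ A *ᵥ Pi.single i 1 = A i i := by
  simp [single_dotProduct]

theorem two_mul_abs_apply_le_of_dotProduct_mulVec_nonneg {A : Matrix n n ℝ} (hA : A.IsSymm)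
    (hpos : ∀ v, 0 ≤ v ⬝ᵥ A *ᵥ v) (i j : n) : 2 * |A i j| ≤ A i i + A j j := by
  have hform (c : ℝ) : (Pi.single i 1 + Pi.single j c) ⬝ᵥ A *ᵥ (Pi.single i 1 + Pi.single j c)
      = A i i + c * (A i j + A j i) + c ^ 2 * A j j := by
    simp only [mulVec_add, mulVec_single, MulOpposite.op_one, one_smul, op_smul_eq_smul,
      dotProduct_add, add_dotProduct, single_dotProduct, col_apply, one_mul, dotProduct_smul,
      smul_eq_mul]
    ring
  have hplus := hform 1 ▸ hpos (Pi.single i 1 + Pi.single j 1)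
  have hminus := hform (-1) ▸ hpos (Pi.single i 1 + Pi.single j (-1))
  rw [hA.apply i j] at hplus hminus
  rcases abs_cases (A i j) with ⟨h, -⟩ | ⟨h, -⟩ <;> linarith

theorem abs_apply_le_of_dotProduct_mulVec_le {A B : Matrix n n ℝ} (hA : A.IsSymm)
    (hA0 : ∀ v, 0 ≤ v ⬝ᵥ A *ᵥ v) (hAB : ∀ v, v ⬝ᵥ A *ᵥ v ≤ v ⬝ᵥ B *ᵥ v) {M : ℝ}
    (hB : ∀ i, B i i ≤ M) (i j : n) : |A i j| ≤ M := by
  have hdiag (i : n) : A i i ≤ M := by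
    have hform := hAB (Pi.single i 1)
    rw [single_dotProduct_mulVec_single, single_dotProduct_mulVec_single] at hform
    exact hform.trans (hB i)
  linarith [two_mul_abs_apply_le_of_dotProduct_mulVec_nonneg hA hA0 i j, hdiag i, hdiag j]

end Matrix

attribute [local instance] Matrix.frobeniusNormedAddCommGroup

theorem frobNorm_eq_norm {k : ℕ} (A : Matrix (Fin k) (Fin k) ℝ) : frobNorm A = ‖A‖ := by
  simp [frobNorm, Matrix.frobenius_norm_def, Real.sqrt_eq_rpow]

theorem area_convergence_of_Lp_metric_convergence_general
    {X : Type*}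
    [MeasurableSpace X]
    (μ : Measure X) [IsFiniteMeasure μ]
    (m : ℕ) (hm : 2 ≤ m)
    (gj : ℕ → X → Matrix (Fin (m-1)) (Fin (m-1)) ℝ)
    (g₀ : X → Matrix (Fin (m-1)) (Fin (m-1)) ℝ)
    (hmeasj : ∀ n i l, Measurable fun x => gj n x i l)
    (hmeas0 : ∀ i l, Measurable fun x => g₀ x i l)
    (hsymm0 : ∀ x, (g₀ x).IsSymm)
    (hposdef0 : ∀ (x : X) (v : Fin (m-1) → ℝ), 0 ≤ v ⬝ᵥ (g₀ x).mulVec v)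
    (hle : ∀ (n : ℕ) (x : X) (v : Fin (m-1) → ℝ),
      v ⬝ᵥ (g₀ x).mulVec v ≤ v ⬝ᵥ (gj n x).mulVec v)
    (hbound : ∃ Λ : ℝ, ∀ n x, frobNorm (gj n x) ≤ Λ)
    (hLp : Tendsto
      (fun n => ∫ x, frobNorm (gj n x - g₀ x) ^ (((m:ℝ) - 1)/2) ∂μ) atTop (nhds 0)) :
    Tendsto (fun n => ∫ x, Real.sqrt (gj n x).det ∂μ) atTop
      (nhds (∫ x, Real.sqrt (g₀ x).det ∂μ)) := by
  obtain ⟨Λ, hΛ⟩ := hbound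
  set K : Set (Matrix (Fin (m-1)) (Fin (m-1)) ℝ) := {A | ∀ i j, |A i j| ≤ Λ}
  have hgj n x : gj n x ∈ K := fun i j => (abs_apply_le_frobNorm _ i j).trans (hΛ n x)
  have hg₀ x : g₀ x ∈ K := abs_apply_le_of_dotProduct_mulVec_le (hsymm0 x) (hposdef0 x) (hle 0 x)
    fun i => (le_abs_self _).trans (hgj 0 x i i)
  have hdist n x : dist (gj n x) (g₀ x) = frobNorm (gj n x - g₀ x) := by
    rw [dist_eq_norm, frobNorm_eq_norm]
  simp_rw [← hdist] at hLp
  have hΦ : Continuous fun A : Matrix (Fin (m-1)) (Fin (m-1)) ℝ => Real.sqrt A.det :=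
    continuous_id.matrix_det.sqrt
  refine tendsto_integral_comp_of_tendsto_integral_dist_rpow
    (isCompact_setOf_abs_apply_le _ _ Λ) hΦ.continuousOn hgj hg₀
    (fun n => (measurable_det_of_measurable_entries (hmeasj n)).sqrt.aestronglyMeasurable)
    (measurable_det_of_measurable_entries hmeas0).sqrt.aestronglyMeasurable (fun n => ?_) ?_ hLp
  · simp_rw [hdist]
    exact (measurable_frobNorm_of_measurable_entries fun i j =>
      (hmeasj n i j).sub (hmeas0 i j)).aestronglyMeasurable
  · have : (2 : ℝ) ≤ m := by exact_mod_cast hm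
    linarith

/-- Convergence of areas (Lemmas 2.7 and 4.3 of Allen–Sormani): on a compact
`(m−1)`-dimensional manifold `Σ` with background metric `h` (represented here by its
volume measure `μ`, with metrics expressed in an `h`-orthonormal frame as matrix fields),
if `g₀ ≤ g_j`, the eigenvalues of `g_j` are uniformly bounded, and
`∫ |g_j − g₀|_h^{(m−1)/2} dA_h → 0`, then `Area(Σ, g_j) → Area(Σ, g₀)`. -/
theorem area_convergence_of_Lp_metric_convergence
    {X : Type*} [TopologicalSpace X] [CompactSpace X]
    [MeasurableSpace X] [BorelSpace X]
    (μ : Measure X) [IsFiniteMeasure μ]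
    (m : ℕ) (hm : 2 ≤ m)
    (gj : ℕ → X → Matrix (Fin (m-1)) (Fin (m-1)) ℝ)
    (g₀ : X → Matrix (Fin (m-1)) (Fin (m-1)) ℝ)
    (hmeasj : ∀ n i l, Measurable fun x => gj n x i l)
    (hmeas0 : ∀ i l, Measurable fun x => g₀ x i l)
    (hsymmj : ∀ n x, (gj n x).IsSymm) (hsymm0 : ∀ x, (g₀ x).IsSymm)
    (hposdef0 : ∀ (x : X) (v : Fin (m-1) → ℝ), 0 ≤ v ⬝ᵥ (g₀ x).mulVec v)
    (hle : ∀ (n : ℕ) (x : X) (v : Fin (m-1) → ℝ),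
      v ⬝ᵥ (g₀ x).mulVec v ≤ v ⬝ᵥ (gj n x).mulVec v)
    (hbound : ∃ Λ : ℝ, ∀ n x, frobNorm (gj n x) ≤ Λ)
    (hLp : Tendsto
      (fun n => ∫ x, frobNorm (gj n x - g₀ x) ^ (((m:ℝ) - 1)/2) ∂μ) atTop (nhds 0)) :
    Tendsto (fun n => ∫ x, Real.sqrt (gj n x).det ∂μ) atTop
      (nhds (∫ x, Real.sqrt (g₀ x).det ∂μ)) :=
  area_convergence_of_Lp_metric_convergence_general μ m hm gj g₀ hmeasj hmeas0 hsymm0 hposdef0 hle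
    hbound hLp
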